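/- arXiv:math/0403129 — 3 statements merged into one kernel-verified Lean document; each statement's English description precedes it below -/
import Mathlib

section
/- Suppose that a finitely generated group G has Property (τ) with respect to a collection 𝒞 of finite index normal subgroups. Then there is a constant c > 1 with the following property: if J is a member of 𝒞 and J is contained in a normal subgroup H of G such that H/J is abelian, then |H/J| < c^{[G : H]}. -/
/-!
Pass to `Q = G/J` and its abelian normal subgroup `A = H/J`, of index `n = [G:H]`. Writing each
`q ∈ Q` as `a * t` with `a ∈ A` and `t` in a fixed transversal, right multiplication by a
generator `s` translates the `A`-coordinate by a Schreier element depending only on `(qA, s)`;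
there are `n * |S|` of them. If `|A| > K ^ (n * |S|)`, pigeonholing the at least `|A|`
homomorphisms `A → ℤ/|A|` by their values on these elements (Dirichlet's box principle) gives a
surjection `Ψ : A → ℤ/d` moving each of them by at most `d/K`. The vertices whose `A`-coordinate
lands in the half-interval `[1, d/2]` of `ℤ/d` then form at most half of `Q`, with boundary at
most `6|S|/K` times their number. Hence a Cheeger constant `≥ ε` forces
`|H/J| ≤ K ^ (|S| * [G:H])` for any `K > 6|S|/ε`.
-/

/-- A (multi)graph: a type of vertices, a type of edges, and an endpoint map
(an edge with endpoints `(a, b)` joins `a` to `b`; edges are counted with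
multiplicity). -/
structure MultiGraph where
  V : Type*
  E : Type*
  ends : E → V × V

/-- `|∂A|`: the number of edges with exactly one endpoint in `A`. -/
noncomputable def MultiGraph.bdry (X : MultiGraph) (A : Set X.V) : ℕ :=
  Nat.card {e : X.E // Xor' ((X.ends e).1 ∈ A) ((X.ends e).2 ∈ A)}

/-- The Cheeger constant `h(X)` of a finite graph `X`: the minimum of `|∂A|/|A|` over
all sets `A` of vertices with `0 < |A| ≤ |V(X)|/2`. -/
noncomputable def MultiGraph.cheeger (X : MultiGraph) : ℝ :=
  sInf {r | ∃ A : Set X.V, 0 < Nat.card A ∧ 2 * Nat.card A ≤ Nat.card X.V ∧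
    r = (X.bdry A : ℝ) / (Nat.card A : ℝ)}

/-- The Cayley graph `X(G/N; S)` of the quotient of `G` by a normal subgroup `N`, with
respect to a finite generating set `S` of `G`: the vertex set is the quotient group
`G/N`, and for each vertex `v` and each `s ∈ S` there is one edge joining `v` to `v·s`
(edges counted with multiplicity, one for each pair `(v, s)`). -/
noncomputable def cayleyQuot (G : Type*) [Group G] (S : Finset G) (N : Subgroup G)
    (hN : N.Normal) : MultiGraph :=
  letI := hN
  { V := G ⧸ N
    E := (G ⧸ N) × {s // s ∈ S}
    ends := fun p => (p.1, p.1 * (QuotientGroup.mk (p.2 : G) : G ⧸ N)) }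

open scoped commutatorElement

open Finset

section TranslateDisagreement

variable {G : Type*} [AddGroup G] [Fintype G] (P : G → Prop) [DecidablePred P]

lemma card_filter_xor_add_add_le (a b : G) :
    #{x | Xor (P x) (P (x + (a + b)))} ≤
      #{x | Xor (P x) (P (x + a))} + #{x | Xor (P x) (P (x + b))} := by
  classical
  have hshift : #{x | Xor (P (x + a)) (P (x + a + b))} = #{x | Xor (P x) (P (x + b))} :=
    card_nbij' (· + a) (· - a) (by intro x; simp) (by intro x; simp)
      (by intro x _; simp) (by intro x _; simp)
  calc #{x | Xor (P x) (P (x + (a + b)))}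
      ≤ #(({x | Xor (P x) (P (x + a))} : Finset G) ∪
          ({x | Xor (P (x + a)) (P (x + a + b))} : Finset G)) := by
        refine card_le_card fun x hx => ?_
        simp only [mem_filter, mem_univ, true_and, mem_union, xor_iff_not_iff, ← add_assoc] at hx ⊢
        tauto
    _ ≤ _ := (card_union_le _ _).trans_eq (by rw [hshift])

lemma card_filter_xor_add_neg (a : G) :
    #{x | Xor (P x) (P (x + -a))} = #{x | Xor (P x) (P (x + a))} :=
  card_nbij' (· + -a) (· + a) (by intro x; simp [xor_comm]) (by intro x; simp [xor_comm])
    (by intro x _; simp) (by intro x _; simp)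

lemma card_filter_xor_add_nsmul_le (n : ℕ) (a : G) :
    #{x | Xor (P x) (P (x + n • a))} ≤ n * #{x | Xor (P x) (P (x + a))} := by
  induction n with
  | zero => simp
  | succ n ih =>
    rw [succ_nsmul]
    linarith [card_filter_xor_add_add_le P (n • a) a]

lemma card_filter_xor_add_zsmul_le (n : ℤ) (a : G) :
    #{x | Xor (P x) (P (x + n • a))} ≤ n.natAbs * #{x | Xor (P x) (P (x + a))} := by
  obtain ⟨k, rfl | rfl⟩ := Int.eq_nat_or_neg n
  · simpa using card_filter_xor_add_nsmul_le P k a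
  · simpa [neg_zsmul, card_filter_xor_add_neg] using card_filter_xor_add_nsmul_le P k a

end TranslateDisagreement

namespace ZMod

def halfInterval (d : ℕ) [NeZero d] : Finset (ZMod d) := {x | 1 ≤ x.val ∧ x.val ≤ d / 2}

variable {d : ℕ} [NeZero d]

lemma mem_halfInterval {x : ZMod d} : x ∈ halfInterval d ↔ 1 ≤ x.val ∧ x.val ≤ d / 2 := by
  simp [halfInterval]

lemma card_halfInterval : #(halfInterval d) = d / 2 := by
  have h : #(halfInterval d) = #(Icc 1 (d / 2)) := by
    refine card_nbij' val (fun n => (n : ZMod d)) (fun x hx => by simpa [mem_halfInterval] using hx)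
      (fun n hn => ?_) (fun x _ => natCast_zmod_val x) (fun n hn => ?_)
    · simp only [coe_Icc, Set.mem_Icc] at hn
      simp [mem_halfInterval, val_natCast_of_lt (show n < d by omega), hn]
    · simp only [coe_Icc, Set.mem_Icc] at hn
      exact val_natCast_of_lt (by omega)
  simpa using h

lemma card_filter_xor_add_one_le :
    #{x : ZMod d | Xor (x ∈ halfInterval d) (x + 1 ∈ halfInterval d)} ≤ 2 := by
  refine (card_le_card (t := {0, ((d / 2 : ℕ) : ZMod d)}) fun x hx => ?_).trans card_le_two
  simp only [mem_filter, mem_univ, true_and, mem_halfInterval, xor_def] at hx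
  have hsucc : (x + 1).val = (x.val + 1) % d := by
    rw [val_add, val_one_eq_one_mod, Nat.add_mod_mod]
  have : x.val = 0 ∨ x.val = d / 2 := by
    rcases (Nat.lt_or_ge (x.val + 1) d) with h | h
    · rw [Nat.mod_eq_of_lt h] at hsucc
      omega
    · rw [show x.val + 1 = d by have := val_lt x; omega, Nat.mod_self] at hsucc
      omega
  rcases this with h | h
  · simp [(val_eq_zero x).mp h]
  · simp [← h]

lemma card_filter_xor_add_intCast_le (u : ℤ) :
    #{x : ZMod d | Xor (x ∈ halfInterval d) (x + u ∈ halfInterval d)} ≤ 2 * u.natAbs := by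
  have := card_filter_xor_add_zsmul_le (· ∈ halfInterval d) u (1 : ZMod d)
  rw [zsmul_one] at this
  exact this.trans (by rw [mul_comm]; exact Nat.mul_le_mul_right _ card_filter_xor_add_one_le)

end ZMod

lemma AddMonoidHom.card_preimage_of_surjective {A B : Type*} [AddGroup A] [AddGroup B] [Finite A]
    (f : A →+ B) (hf : Function.Surjective f) (s : Finset B) :
    Nat.card {a // f a ∈ s} = #s * Nat.card f.ker := by
  classical
  have := Fintype.ofFinite A
  rw [Nat.card_eq_fintype_card, Fintype.card_subtype,
    card_eq_sum_card_fiberwise (f := f) (t := s) fun a ha => by simpa using ha,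
    sum_const_nat fun b hb => ?_]
  rw [filter_filter, filter_congr fun a _ => and_iff_right_of_imp fun h => h ▸ hb,
    AddMonoidHom.card_fiber_eq_of_mem_range f (hf b) ⟨0, map_zero f⟩, ← Fintype.card_subtype,
    ← Nat.card_eq_fintype_card]
  rfl

lemma ZMod.exists_addMonoidHom_injective {n m : ℕ} [NeZero n] (h : n ∣ m) (hm : m ≠ 0) :
    ∃ f : ZMod n →+ ZMod m, Function.Injective f := by
  set g : ZMod m := ((m / n : ℕ) : ZMod m)
  have hg : addOrderOf g = n := by
    rw [ZMod.addOrderOf_coe _ hm, Nat.gcd_eq_right (Nat.div_dvd_of_dvd h), Nat.div_div_self h hm]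
  refine ⟨ZMod.lift n ⟨zmultiplesHom _ g, by
      rw [zmultiplesHom_apply, ← hg, natCast_zsmul, addOrderOf_nsmul_eq_zero]⟩,
    (injective_iff_map_eq_zero _).2 fun x hx => ?_⟩
  rw [← ZMod.intCast_zmod_cast x, ZMod.lift_coe] at hx
  have := addOrderOf_dvd_iff_zsmul_eq_zero.mpr hx
  rwa [hg, ← ZMod.intCast_zmod_eq_zero_iff_dvd, ZMod.intCast_zmod_cast] at this

lemma Nat.mul_natAbs_sub_lt_of_div_eq {a b K m : ℕ} (hm : 0 < m) (h : a * K / m = b * K / m) :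
    K * ((a : ℤ) - b).natAbs < m := by
  have e1 := Nat.div_add_mod (a * K) m
  have e2 := Nat.div_add_mod (b * K) m
  have r1 := Nat.mod_lt (a * K) hm
  have r2 := Nat.mod_lt (b * K) hm
  have : K * ((a : ℤ) - b).natAbs = (((a * K : ℕ) : ℤ) - (b * K : ℕ)).natAbs := by
    rw [show ((a * K : ℕ) : ℤ) - (b * K : ℕ) = K * ((a : ℤ) - b) by push_cast; ring,
      Int.natAbs_mul, Int.natAbs_natCast]
  rw [h] at e1
  omega

lemma AddCommGroup.card_le_card_addMonoidHom_zmod (A : Type*) [AddCommGroup A] [Finite A] :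
    Nat.card A ≤ Nat.card (A →+ ZMod (Nat.card A)) := by
  classical
  obtain ⟨ι, _, n, hn, ⟨e⟩⟩ := AddCommGroup.equiv_directSum_zmod_of_finite' A
  have : ∀ i, NeZero (n i) := fun i => ⟨by have := hn i; omega⟩
  set m := Nat.card A
  let eA : A ≃+ ((i : ι) → ZMod (n i)) := e.trans (DirectSum.addEquivProd _)
  have hm : m = ∏ i, n i := by simp [m, Nat.card_congr eA.toEquiv]
  have hm0 : m ≠ 0 := Nat.card_pos.ne'
  have hemb i := ZMod.exists_addMonoidHom_injective (hm ▸ dvd_prod_of_mem n (mem_univ i)) hm0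
  choose emb hemb using hemb
  let Φ : ((i : ι) → ZMod (n i)) → (A →+ ZMod m) := fun v =>
    (∑ i, (emb i).comp ((AddMonoidHom.mulLeft (v i)).comp (Pi.evalAddMonoidHom _ i))).comp
      eA.toAddMonoidHom
  have hΦ : ∀ v j, Φ v (eA.symm (Pi.single j 1)) = emb j (v j) := fun v j => by
    simp only [Φ, AddMonoidHom.comp_apply, AddEquiv.coe_toAddMonoidHom, AddEquiv.apply_symm_apply,
      AddMonoidHom.finsetSum_apply]
    rw [sum_eq_single j (fun i _ hi => by simp [Pi.single_eq_of_ne hi]) (by simp)]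
    simp
  have : Finite (A →+ ZMod m) := Finite.of_injective _ DFunLike.coe_injective
  calc m = Nat.card ((i : ι) → ZMod (n i)) := by simp [hm]
    _ ≤ Nat.card (A →+ ZMod m) := Nat.card_le_card_of_injective Φ fun v w hvw =>
        funext fun j => hemb j (by rw [← hΦ, ← hΦ, hvw])

lemma ZMod.addSubgroup_eq_zmultiples {m : ℕ} [NeZero m] (R : AddSubgroup (ZMod m)) :
    R = AddSubgroup.zmultiples ((m / Nat.card R : ℕ) : ZMod m) := by
  set d := Nat.card R
  have hdm : d ∣ m := by simpa using R.card_addSubgroup_dvd_card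
  have hd : 0 < d := Nat.card_pos
  have hm : m = d * (m / d) := (Nat.mul_div_cancel' hdm).symm
  refine AddSubgroup.eq_of_le_of_card_ge (fun y hy => ?_) ?_
  · have hdy : d • y = 0 := congrArg Subtype.val (card_nsmul_eq_zero' (G := R) (x := ⟨y, hy⟩))
    rw [← ZMod.natCast_zmod_val y, nsmul_eq_mul, ← Nat.cast_mul, ZMod.natCast_eq_zero_iff] at hdy
    obtain ⟨j, hj⟩ := (Nat.mul_dvd_mul_iff_left hd).mp
      (by rwa [← hm] : d * (m / d) ∣ d * y.val)
    refine AddSubgroup.mem_zmultiples_iff.mpr ⟨j, ?_⟩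
    rw [← ZMod.natCast_zmod_val y, hj]
    simp [zsmul_eq_mul, mul_comm]
  · rw [Nat.card_zmultiples, ZMod.addOrderOf_coe _ (NeZero.ne m),
      Nat.gcd_eq_right (Nat.div_dvd_of_dvd hdm), Nat.div_div_self hdm (NeZero.ne m)]

lemma AddMonoidHom.exists_surjective_zmod_of_small {A ι : Type*} [AddGroup A] {m K : ℕ}
    [NeZero m] (ψ : A →+ ZMod m) (hψ : ψ ≠ 0) (v : ι → A)
    (hv : ∀ i, ∃ w : ℤ, ψ (v i) = w ∧ K * w.natAbs < m) :
    ∃ d, 2 ≤ d ∧ ∃ Ψ : A →+ ZMod d, Function.Surjective Ψ ∧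
      ∀ i, ∃ u : ℤ, Ψ (v i) = u ∧ K * u.natAbs ≤ d := by
  -- `range ψ` is generated by `q = m / d`; dividing by `q` identifies it with `ZMod d` and
  -- keeps the representatives `w` small.
  set R := ψ.range
  set d := Nat.card R
  set q := m / d
  have hR : R = AddSubgroup.zmultiples (q : ZMod m) := ZMod.addSubgroup_eq_zmultiples R
  have hqd : q * d = m := Nat.div_mul_cancel (by simpa using R.card_addSubgroup_dvd_card)
  let gen : R := ⟨q, by rw [hR]; exact AddSubgroup.mem_zmultiples _⟩
  have hgen : ∀ x : R, x ∈ AddSubgroup.zmultiples gen := fun x => by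
    have hx : (x : ZMod m) ∈ AddSubgroup.zmultiples (q : ZMod m) := by rw [← hR]; exact x.2
    obtain ⟨k, hk⟩ := AddSubgroup.mem_zmultiples_iff.mp hx
    exact AddSubgroup.mem_zmultiples_iff.mpr ⟨k, Subtype.ext hk⟩
  let e : ZMod d ≃+ R := zmodAddEquivOfGenerator hgen rfl
  refine ⟨d, (AddSubgroup.one_lt_card_iff_ne_bot R).mpr (range_eq_bot_iff.not.mpr hψ),
    e.symm.toAddMonoidHom.comp ψ.rangeRestrict,
    e.symm.surjective.comp ψ.rangeRestrict_surjective, fun i => ?_⟩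
  obtain ⟨w, hw, hwK⟩ := hv i
  have hwR : (w : ZMod m) ∈ AddSubgroup.zmultiples (q : ZMod m) := by
    rw [← hR, ← hw]; exact mem_range.mpr ⟨v i, rfl⟩
  obtain ⟨k, hk⟩ := AddSubgroup.mem_zmultiples_iff.mp hwR
  obtain ⟨u, rfl⟩ : (q : ℤ) ∣ w := by
    have : ((k * q : ℤ) : ZMod m) = w := by simpa [zsmul_eq_mul] using hk
    rw [ZMod.intCast_eq_intCast_iff_dvd_sub] at this
    have hqw := dvd_add ((Int.natCast_dvd_natCast.mpr ⟨d, hqd.symm⟩).trans this)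
      (dvd_mul_left (q : ℤ) k)
    rwa [sub_add_cancel] at hqw
  refine ⟨u, ?_, ?_⟩
  · have : ψ.rangeRestrict (v i) = u • gen :=
      Subtype.ext (by simp [gen, hw, zsmul_eq_mul, mul_comm])
    change e.symm (ψ.rangeRestrict (v i)) = u
    rw [this]
    exact zmodAddEquivOfGenerator_symm_apply_zsmul hgen rfl u
  · rw [Int.natAbs_mul, Int.natAbs_natCast] at hwK
    refine (Nat.lt_of_mul_lt_mul_left (a := q) ?_).le
    rw [hqd]
    linarith

theorem AddCommGroup.exists_surjective_zmod_small {A ι : Type*} [AddCommGroup A] [Finite A]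
    [Finite ι] (v : ι → A) {K : ℕ} (hK : 0 < K) (hA : K ^ Nat.card ι < Nat.card A) :
    ∃ d, 2 ≤ d ∧ ∃ Ψ : A →+ ZMod d, Function.Surjective Ψ ∧
      ∀ i, ∃ u : ℤ, Ψ (v i) = u ∧ K * u.natAbs ≤ d := by
  set m := Nat.card A
  have hm : 0 < m := Nat.card_pos
  have : NeZero m := ⟨hm.ne'⟩
  have : Finite (A →+ ZMod m) := Finite.of_injective _ DFunLike.coe_injective
  let bucket : (A →+ ZMod m) → ι → Fin K := fun χ i =>
    ⟨(χ (v i)).val * K / m, Nat.div_lt_of_lt_mul (Nat.mul_lt_mul_of_pos_right (χ (v i)).val_lt hK)⟩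
  obtain ⟨χ₁, χ₂, hbucket, hne⟩ := Function.not_injective_iff.mp fun hinj =>
    (Nat.card_le_card_of_injective bucket hinj).not_gt <| by
      rw [Nat.card_fun, Nat.card_fin]
      exact hA.trans_le (AddCommGroup.card_le_card_addMonoidHom_zmod A)
  refine (χ₁ - χ₂).exists_surjective_zmod_of_small (sub_ne_zero.mpr hne) v fun i =>
    ⟨(χ₁ (v i)).val - (χ₂ (v i)).val, by simp, ?_⟩
  exact Nat.mul_natAbs_sub_lt_of_div_eq hm (congrArg Fin.val (congrFun hbucket i))

namespace Subgroup

variable {Q : Type*} [Group Q] (A : Subgroup Q) [A.Normal]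

@[simp]
lemma _root_.QuotientGroup.mk_coe_eq_one (a : A) : ((a : Q) : Q ⧸ A) = 1 :=
  (QuotientGroup.eq_one_iff _).mpr a.2

noncomputable def transversalCoord (q : Q) : A :=
  ⟨q * (q : Q ⧸ A).out⁻¹, (QuotientGroup.eq_one_iff _).mp (by simp)⟩

@[simp]
lemma transversalCoord_mul_out (q : Q) : (A.transversalCoord q : Q) * (q : Q ⧸ A).out = q := by
  simp [transversalCoord]

@[simp]
lemma transversalCoord_mul_out_eq (a : A) (j : Q ⧸ A) : A.transversalCoord (a * j.out) = a :=
  Subtype.ext (by simp [transversalCoord])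

lemma transversalCoord_mul (q x : Q) :
    A.transversalCoord (q * x) =
      A.transversalCoord q * A.transversalCoord ((q : Q ⧸ A).out * x) :=
  Subtype.ext (by simp [transversalCoord, mul_assoc])

noncomputable def transversalEquiv : Q ≃ (Q ⧸ A) × A where
  toFun q := (q, A.transversalCoord q)
  invFun p := p.2 * p.1.out
  left_inv q := by simp
  right_inv p := by simp

lemma card_transversalCoord [Finite Q] (P : A → Prop) :
    Nat.card {q // P (A.transversalCoord q)} = A.index * Nat.card {a // P a} := by
  have := Fintype.ofFinite (Q ⧸ A)
  rw [Nat.card_congr ((A.transversalEquiv.subtypeEquiv (p := fun q => P (A.transversalCoord q))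
    (q := fun x => P x.2) fun _ => Iff.rfl).trans
    (Equiv.subtypeProdEquivSigmaSubtype fun _ a => P a)), Nat.card_sigma]
  simp [Subgroup.index, Nat.card_eq_fintype_card]

lemma card_edges_transversalCoord [Finite Q] [Fintype (Q ⧸ A)] {S : Type*} [Fintype S]
    (σ : S → Q) (R : A → A → Prop) :
    Nat.card {e : Q × S // R (A.transversalCoord e.1) (A.transversalCoord (e.1 * σ e.2))} =
      ∑ p : (Q ⧸ A) × S,
        Nat.card {a : A // R a (a * A.transversalCoord (p.1.out * σ p.2))} := by
  let E : Q × S ≃ ((Q ⧸ A) × S) × A :=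
    { toFun e := ((e.1, e.2), A.transversalCoord e.1)
      invFun p := (p.2 * p.1.1.out, p.1.2)
      left_inv e := by simp
      right_inv p := by simp }
  rw [← Nat.card_sigma]
  refine Nat.card_congr ((E.subtypeEquiv (p := fun e =>
      R (A.transversalCoord e.1) (A.transversalCoord (e.1 * σ e.2))) (q := fun x =>
      R x.2 (x.2 * A.transversalCoord (x.1.1.out * σ x.1.2))) fun e => ?_).trans
    (Equiv.subtypeProdEquivSigmaSubtype fun (p : (Q ⧸ A) × S) a =>
      R a (a * A.transversalCoord (p.1.out * σ p.2))))
  simp only [E, Equiv.coe_fn_mk]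
  rw [transversalCoord_mul]

end Subgroup

lemma AddMonoidHom.card_xor_halfInterval_add_le {A : Type*} [AddGroup A] [Finite A] {d K : ℕ}
    [NeZero d] (Ψ : A →+ ZMod d) (hΨ : Function.Surjective Ψ) {h : A} {u : ℤ} (hu : Ψ h = u)
    (huK : K * u.natAbs ≤ d) :
    K * Nat.card {a // Xor (Ψ a ∈ ZMod.halfInterval d) (Ψ (a + h) ∈ ZMod.halfInterval d)} ≤
      2 * d * Nat.card Ψ.ker := by
  have hcard : Nat.card {a // Xor (Ψ a ∈ ZMod.halfInterval d) (Ψ (a + h) ∈ ZMod.halfInterval d)} =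
      #{x : ZMod d | Xor (x ∈ ZMod.halfInterval d) (x + u ∈ ZMod.halfInterval d)} *
        Nat.card Ψ.ker := by
    rw [← Ψ.card_preimage_of_surjective hΨ]
    exact Nat.card_congr (Equiv.subtypeEquivRight fun a => by simp [hu])
  rw [hcard]
  calc K * (#{x : ZMod d | Xor (x ∈ ZMod.halfInterval d) (x + u ∈ ZMod.halfInterval d)} *
        Nat.card Ψ.ker)
      ≤ K * (2 * u.natAbs * Nat.card Ψ.ker) := by
        gcongr; exact ZMod.card_filter_xor_add_intCast_le u
    _ = 2 * (K * u.natAbs) * Nat.card Ψ.ker := by ring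
    _ ≤ 2 * d * Nat.card Ψ.ker := by gcongr

theorem Subgroup.exists_folner_set_of_zmod {Q S : Type*} [Group Q] [Finite Q] [Finite S]
    (σ : S → Q) (A : Subgroup Q) [A.Normal] {d K : ℕ} [NeZero d] (hd : 2 ≤ d)
    (Ψ : Additive A →+ ZMod d) (hΨ : Function.Surjective Ψ)
    (hsmall : ∀ (j : Q ⧸ A) (s : S), ∃ u : ℤ,
      Ψ (.ofMul (A.transversalCoord (j.out * σ s))) = u ∧ K * u.natAbs ≤ d) :
    ∃ Y : Set Q, 0 < Nat.card Y ∧ 2 * Nat.card Y ≤ Nat.card Q ∧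
      K * Nat.card {e : Q × S // Xor (e.1 ∈ Y) (e.1 * σ e.2 ∈ Y)} ≤
        6 * Nat.card S * Nat.card Y := by
  have := Fintype.ofFinite (Q ⧸ A)
  have := Fintype.ofFinite S
  set I := ZMod.halfInterval d
  set κ := Nat.card Ψ.ker
  let Y : Set Q := {q | Ψ (.ofMul (A.transversalCoord q)) ∈ I}
  have hA : Nat.card A = d * κ := by
    have h := Ψ.card_preimage_of_surjective hΨ univ
    rwa [card_univ, ZMod.card, Nat.card_congr (Equiv.subtypeUnivEquiv fun _ => mem_univ _)] at h
  have hY : Nat.card Y = A.index * (d / 2 * κ) := by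
    rw [← ZMod.card_halfInterval, ← Ψ.card_preimage_of_surjective hΨ I]
    exact A.card_transversalCoord fun a => Ψ (.ofMul a) ∈ I
  have hedge (j : Q ⧸ A) (s : S) : K * Nat.card {a : A // Xor (Ψ (.ofMul a) ∈ I)
      (Ψ (.ofMul (a * A.transversalCoord (j.out * σ s))) ∈ I)} ≤ 2 * d * κ := by
    obtain ⟨u, hu, huK⟩ := hsmall j s
    exact Ψ.card_xor_halfInterval_add_le hΨ hu huK
  have hκ : 0 < κ := Nat.card_pos
  have hindex : 0 < A.index := Nat.card_pos
  refine ⟨Y, ?_, ?_, ?_⟩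
  · rw [hY]
    have : 0 < d / 2 := by omega
    positivity
  · rw [hY, ← A.index_mul_card, hA]
    calc 2 * (A.index * (d / 2 * κ)) = A.index * (2 * (d / 2) * κ) := by ring
      _ ≤ A.index * (d * κ) := by gcongr; exact Nat.mul_div_le d 2
  · change K * Nat.card {e : Q × S // Xor (Ψ (.ofMul (A.transversalCoord e.1)) ∈ I)
      (Ψ (.ofMul (A.transversalCoord (e.1 * σ e.2))) ∈ I)} ≤ _
    rw [A.card_edges_transversalCoord σ fun a b => Xor (Ψ (.ofMul a) ∈ I) (Ψ (.ofMul b) ∈ I),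
      mul_sum]
    calc _ ≤ ∑ _p : (Q ⧸ A) × S, 2 * d * κ := sum_le_sum fun p _ => hedge p.1 p.2
      _ = A.index * Nat.card S * (2 * d * κ) := by
        simp [Subgroup.index, Nat.card_eq_fintype_card]
      _ ≤ A.index * Nat.card S * (6 * (d / 2) * κ) := by
        gcongr A.index * Nat.card S * (?_ * κ); omega
      _ = 6 * Nat.card S * Nat.card Y := by rw [hY]; ring

open scoped IsMulCommutative in
theorem Subgroup.exists_folner_set {Q S : Type*} [Group Q] [Finite Q] [Finite S]
    (σ : S → Q) (A : Subgroup Q) [A.Normal] [IsMulCommutative A] {K : ℕ} (hK : 0 < K)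
    (hA : K ^ (A.index * Nat.card S) < Nat.card A) :
    ∃ Y : Set Q, 0 < Nat.card Y ∧ 2 * Nat.card Y ≤ Nat.card Q ∧
      K * Nat.card {e : Q × S // Xor (e.1 ∈ Y) (e.1 * σ e.2 ∈ Y)} ≤
        6 * Nat.card S * Nat.card Y := by
  obtain ⟨d, hd, Ψ, hΨ, hsmall⟩ := AddCommGroup.exists_surjective_zmod_small (A := Additive A)
    (fun p : (Q ⧸ A) × S => .ofMul (A.transversalCoord (p.1.out * σ p.2))) hK
    (by rw [Nat.card_prod]; exact hA)
  have : NeZero d := ⟨by omega⟩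
  exact A.exists_folner_set_of_zmod σ hd Ψ hΨ fun j s => hsmall (j, s)

lemma MultiGraph.cheeger_le (X : MultiGraph) {A : Set X.V} (hA : 0 < Nat.card A)
    (hA2 : 2 * Nat.card A ≤ Nat.card X.V) : X.cheeger ≤ X.bdry A / Nat.card A :=
  csInf_le ⟨0, by rintro _ ⟨B, -, -, rfl⟩; positivity⟩ ⟨A, hA, hA2, rfl⟩

theorem cheeger_cayleyQuot_le {G : Type*} [Group G] (S : Finset G) {J H : Subgroup G}
    (hJ : J.Normal) [J.FiniteIndex] [H.Normal] (hJH : J ≤ H)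
    (hcomm : ∀ a ∈ H, ∀ b ∈ H, ⁅a, b⁆ ∈ J) {K : ℕ} (hK : 0 < K)
    (hbig : K ^ (H.index * S.card) < J.relIndex H) :
    (cayleyQuot G S J hJ).cheeger ≤ 6 * S.card / K := by
  set A := H.map (QuotientGroup.mk' J)
  have : A.Normal := ‹H.Normal›.map _ (QuotientGroup.mk'_surjective J)
  have : IsMulCommutative A := .of_comm fun ⟨_, a, ha, hxa⟩ ⟨_, b, hb, hxb⟩ => by
    subst hxa hxb
    refine Subtype.ext (commutatorElement_eq_one_iff_mul_comm.mp ?_)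
    rw [← map_commutatorElement, QuotientGroup.mk'_apply, QuotientGroup.eq_one_iff]
    exact hcomm a ha b hb
  have hindex : A.index = H.index :=
    H.index_map_eq (QuotientGroup.mk'_surjective J) (by rwa [QuotientGroup.ker_mk'])
  have hcard : Nat.card A = J.relIndex H := by
    rw [← Subgroup.relIndex_ker, QuotientGroup.ker_mk']
  have hS : Nat.card S = S.card := by simp
  obtain ⟨Y, hY0, hY2, hYK⟩ := A.exists_folner_set (fun s : S => ((s : G) : G ⧸ J)) hK
    (by rwa [hindex, hcard, hS])
  rw [hS] at hYK
  calc (cayleyQuot G S J hJ).cheeger ≤ (cayleyQuot G S J hJ).bdry Y / Nat.card Y :=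
        MultiGraph.cheeger_le _ hY0 hY2
    _ ≤ 6 * S.card / K := by
      rw [div_le_div_iff₀ (by exact_mod_cast hY0) (by exact_mod_cast hK)]
      exact_mod_cast (mul_comm _ _).trans_le hYK

theorem stmt4_general (G : Type*) [Group G] (S : Finset G)
    (C : Set (Subgroup G))
    (hCn : ∀ N ∈ C, N.Normal) (hCfi : ∀ N ∈ C, N.FiniteIndex)
    (htau : ∃ ε : ℝ, 0 < ε ∧ ∀ N, ∀ hN : N ∈ C,
      ε ≤ (cayleyQuot G S N (hCn N hN)).cheeger) :
    ∃ c : ℝ, 1 < c ∧ ∀ J ∈ C, ∀ H : Subgroup G, H.Normal → J ≤ H →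
      (∀ a ∈ H, ∀ b ∈ H, ⁅a, b⁆ ∈ J) →
      ((J.relIndex H : ℝ) < c ^ H.index) := by
  obtain ⟨ε, hε, htau⟩ := htau
  obtain ⟨K, hKε⟩ := exists_nat_gt (6 * S.card / ε)
  have hK : 0 < K := by exact_mod_cast (by positivity : (0 : ℝ) ≤ 6 * S.card / ε).trans_lt hKε
  refine ⟨K ^ S.card + 1, lt_add_of_pos_left 1 <| by positivity, fun J hJ H hH hJH hcomm => ?_⟩
  have := hCfi J hJ
  have : H.FiniteIndex := Subgroup.finiteIndex_of_le hJH
  by_contra! hle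
  have hbig : K ^ (H.index * S.card) < J.relIndex H := by
    have : ((K : ℝ) ^ S.card) ^ H.index < (K ^ S.card + 1) ^ H.index :=
      pow_lt_pow_left₀ (lt_add_one _) (by positivity) Subgroup.FiniteIndex.index_ne_zero
    exact_mod_cast (by rw [mul_comm, pow_mul]; exact this.trans_le hle :
      ((K : ℝ) ^ (H.index * S.card)) < J.relIndex H)
  have hsmall := cheeger_cayleyQuot_le S (hCn J hJ) hJH hcomm hK hbig
  have : 6 * S.card / K < ε := by
    rw [div_lt_iff₀ (by exact_mod_cast hK)]
    rw [div_lt_iff₀ hε] at hKε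
    linarith
  linarith [htau J hJ]

/-- **Theorem 3.1 (Lubotzky–Weiss).** Suppose a finitely generated group `G` (with
finite generating set `S`) has Property `(τ)` with respect to a collection `𝒞` of
finite index normal subgroups, i.e. the Cheeger constants of the Cayley graphs
`X(G/N; S)`, `N ∈ 𝒞`, are bounded away from zero.  Then there is a constant `c > 1`
such that whenever `J ∈ 𝒞` is contained in a normal subgroup `H` of `G` with `H/J`
abelian, we have `|H/J| < c^[G:H]`. -/
theorem stmt4 (G : Type*) [Group G] (S : Finset G)
    (hS : Subgroup.closure (S : Set G) = ⊤)
    (C : Set (Subgroup G))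
    (hCn : ∀ N ∈ C, N.Normal) (hCfi : ∀ N ∈ C, N.FiniteIndex)
    (htau : ∃ ε : ℝ, 0 < ε ∧ ∀ N, ∀ hN : N ∈ C,
      ε ≤ (cayleyQuot G S N (hCn N hN)).cheeger) :
    ∃ c : ℝ, 1 < c ∧ ∀ J ∈ C, ∀ H : Subgroup G, H.Normal → J ≤ H →
      (∀ a ∈ H, ∀ b ∈ H, ⁅a, b⁆ ∈ J) →
      ((J.relIndex H : ℝ) < c ^ H.index) :=
  stmt4_general G S C hCn hCfi htau
end

section
/- Let X be a finite graph with at least two vertices. Then the Cheeger constant of X satisfies h(X) ≤ w(X)/⌊|V(X)|/2⌋, where w(X) is the width of X. -/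
/-- The width `w(X)` of a finite graph `X`: the minimum, over all linear orderings of
the vertices (bijections `Fin |V(X)| ≃ V(X)`), of the maximal value of `|∂D_n|`, where
`D_n` is the set of the first `n` vertices. -/
noncomputable def MultiGraph.width (X : MultiGraph) : ℕ :=
  sInf {w | ∃ e : Fin (Nat.card X.V) ≃ X.V,
    ∀ n : ℕ, X.bdry (⇑e '' {m | (m : ℕ) < n}) ≤ w}

/-- The Cheeger constant of a finite graph with at least two vertices is at most its
width divided by `⌊|V(X)|/2⌋`. -/
theorem stmt5 (X : MultiGraph) [Finite X.V] [Finite X.E]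
    (hV : 2 ≤ Nat.card X.V) :
    X.cheeger ≤ (X.width : ℝ) / ((Nat.card X.V / 2 : ℕ) : ℝ) := by

  set N := Nat.card X.V with hN
  set k := N / 2 with hk
  have hk1 : 1 ≤ k := Nat.le_div_iff_mul_le (by norm_num) |>.mpr (by omega)
  have hkN : k ≤ N := Nat.div_le_self _ _
  -- the width set is nonempty
  have hSne : {w | ∃ e : Fin (Nat.card X.V) ≃ X.V,
      ∀ n : ℕ, X.bdry (⇑e '' {m | (m : ℕ) < n}) ≤ w}.Nonempty := by
    refine ⟨Nat.card X.E, (Nat.equivFinOfCardPos (by omega)).symm, fun n => ?_⟩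
    exact Nat.card_le_card_of_injective Subtype.val Subtype.val_injective
  have hw : X.width ∈ {w | ∃ e : Fin (Nat.card X.V) ≃ X.V,
      ∀ n : ℕ, X.bdry (⇑e '' {m | (m : ℕ) < n}) ≤ w} := Nat.sInf_mem hSne
  obtain ⟨e, he⟩ := hw
  set A : Set X.V := ⇑e '' {m | (m : ℕ) < k} with hA
  have hcardA : Nat.card A = k := by
    have h1 : Nat.card A = Nat.card {m : Fin N | (m : ℕ) < k} := by
      rw [Nat.card_coe_set_eq, Nat.card_coe_set_eq, hA,
        Set.ncard_image_of_injective _ e.injective]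
    rw [h1]
    have : {m : Fin N | (m : ℕ) < k} ≃ Fin k :=
      { toFun := fun x => ⟨x.1, x.2⟩
        invFun := fun i => ⟨⟨i.1, lt_of_lt_of_le i.2 hkN⟩, i.2⟩
        left_inv := fun x => rfl
        right_inv := fun i => rfl }
    rw [Nat.card_eq_of_equiv_fin this]
  have hmem : (X.bdry A : ℝ) / (Nat.card A : ℝ) ∈ {r | ∃ A : Set X.V,
      0 < Nat.card A ∧ 2 * Nat.card A ≤ Nat.card X.V ∧
      r = (X.bdry A : ℝ) / (Nat.card A : ℝ)} := by
    refine ⟨A, by omega, ?_, rfl⟩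
    rw [hcardA]
    omega
  have hbdd : BddBelow {r | ∃ A : Set X.V,
      0 < Nat.card A ∧ 2 * Nat.card A ≤ Nat.card X.V ∧
      r = (X.bdry A : ℝ) / (Nat.card A : ℝ)} := by
    refine ⟨0, fun r hr => ?_⟩
    obtain ⟨B, _, _, rfl⟩ := hr
    positivity
  refine le_trans (csInf_le hbdd hmem) ?_
  rw [hcardA]
  have hkpos : (0 : ℝ) < (k : ℝ) := by exact_mod_cast hk1
  gcongr
  exact_mod_cast he k
end

section
/- Let A be a finite abelian group with finite generating set Σ. Then the width of the Cayley graph of A with respect to Σ satisfies w(X(A; Σ)) ≤ 6|Σ||A| / ⌊(|A| − 1)^{1/|Σ|}⌋, provided ⌊(|A| − 1)^{1/|Σ|}⌋ ≥ 1. -/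
/-- The Cayley graph `X(A; Σ)` of a group `A` with respect to a finite generating set
`Σ`: the vertex set is `A`, and for each vertex `a` and each `s ∈ Σ` there is one edge
joining `a` to `a·s` (edges counted with multiplicity, one for each pair `(a, s)`). -/
noncomputable def cayleyGraph (A : Type*) [Group A] (Sg : Finset A) : MultiGraph :=
  { V := A
    E := A × {s // s ∈ Sg}
    ends := fun p => (p.1, p.1 * (p.2 : A)) }

/-!
Order the vertices by the value of a homomorphism `χ : A → ℤ/N` (with `N = |A|`), read in
`{0, …, N - 1}`. Every initial segment is then a sublevel set `{χ ≤ v}`, and the edge `(a, a s)`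
leaves it only if `χ a` lies within `‖χ s‖` of `v` or of the wrap-around point, where `‖x‖` is
the distance from `x` to `0` in `ℤ/N` (`x.valMinAbs.natAbs`). Since `χ` is
constant on the cosets of its kernel `K` and takes values in `|K| ℤ / N ℤ`, at most
`2 ‖χ s‖ + 2 |K|` vertices `a` do so. There are `|A| > b ^ |Σ|` such homomorphisms, so
pigeonholing them by `(⌊b χ(s) / N⌋)_{s ∈ Σ}` gives a nontrivial `χ` with `‖χ s‖ b < N` on `Σ`;
as `Σ` generates, some `χ s` is a nonzero multiple of `|K|`, so also `|K| b < N`. Summing over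
`Σ`, the width times `b` is at most `4 |Σ| |A|`.
-/

open Finset

theorem Nat.sub_lt_of_div_eq_div {m n N : ℕ} (h : m / N = n / N) (hN : 0 < N) : m - n < N := by
  have := Nat.mod_add_div m N
  have := Nat.mod_add_div n N
  have := Nat.mod_lt m hN
  rw [h] at *
  omega

theorem Nat.mul_card_filter_dvd_Icc_le {g : ℕ} (hg : 0 < g) (lo hi : ℕ) :
    g * #{x ∈ Icc lo hi | g ∣ x} ≤ hi + g - lo := by
  have hsub : {x ∈ Icc lo hi | g ∣ x} ⊆ (Icc ((lo + g - 1) / g) (hi / g)).image (g * ·) := by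
    intro x hx
    obtain ⟨hx, q, rfl⟩ := mem_filter.mp hx
    rw [mem_Icc] at hx
    refine mem_image.mpr ⟨q, mem_Icc.mpr ⟨?_, ?_⟩, rfl⟩
    · exact Nat.lt_succ_iff.mp <| (Nat.div_lt_iff_lt_mul hg).mpr <| by
        rw [Nat.succ_mul, mul_comm]; omega
    · exact (Nat.le_div_iff_mul_le hg).mpr (by rw [mul_comm]; exact hx.2)
  have hlo := Nat.div_add_mod (lo + g - 1) g
  have hmod := Nat.mod_lt (lo + g - 1) hg
  have hhi := Nat.div_mul_le_self hi g
  calc g * #{x ∈ Icc lo hi | g ∣ x}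
      ≤ g * (hi / g + 1 - (lo + g - 1) / g) := by
        gcongr
        exact (card_le_card hsub).trans (Finset.card_image_le.trans (Nat.card_Icc _ _).le)
    _ ≤ hi + g - lo := by
        rw [Nat.mul_sub, mul_add, mul_one, mul_comm g (hi / g)]
        omega

theorem Nat.floor_rpow_one_div_pow_le {x : ℝ} (hx : 0 ≤ x) {d : ℕ} (hd : d ≠ 0) :
    (⌊x ^ ((1 : ℝ) / d)⌋₊ : ℝ) ^ d ≤ x :=
  calc (⌊x ^ ((1 : ℝ) / d)⌋₊ : ℝ) ^ d ≤ (x ^ ((1 : ℝ) / d)) ^ d :=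
        pow_le_pow_left₀ (Nat.cast_nonneg _) (Nat.floor_le (by positivity)) d
    _ = x := by rw [one_div, Real.rpow_inv_natCast_pow hx hd]

theorem Fintype.exists_equiv_fin_image_lt_sublevel {α : Type*} [Fintype α]
    (f : α → ℕ) :
    ∃ e : Fin (Nat.card α) ≃ α, ∀ n : ℕ, ∃ v,
      (∀ a ∈ e '' {m | (m : ℕ) < n}, f a ≤ v) ∧ ∀ a ∉ e '' {m | (m : ℕ) < n}, v ≤ f a := by
  let e₀ := (Finite.equivFin α).symm
  let e := (Tuple.sort (f ∘ e₀)).trans e₀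
  have hmono : Monotone (f ∘ e) := Tuple.monotone_sort (f ∘ e₀)
  refine ⟨e, fun n => ?_⟩
  by_cases hn : n < Nat.card α
  · refine ⟨f (e ⟨n, hn⟩), ?_, fun a ha => ?_⟩
    · rintro _ ⟨m, hm, rfl⟩
      exact hmono (Fin.le_def.mpr (le_of_lt hm))
    · obtain ⟨m, rfl⟩ := e.surjective a
      exact hmono (Fin.le_def.mpr (not_lt.mp fun hm => ha ⟨m, hm, rfl⟩))
  · refine ⟨univ.sup f, fun a _ => le_sup (mem_univ a), fun a ha => ?_⟩
    exact absurd ⟨e.symm a, (e.symm a).isLt.trans_le (not_lt.mp hn), e.apply_symm_apply a⟩ ha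

theorem ZMod.natAbs_valMinAbs_le_val_sub {N : ℕ} [NeZero N] {x y : ZMod N}
    (h : y.val ≤ x.val) :
    (x - y).valMinAbs.natAbs ≤ x.val - y.val := by
  rw [valMinAbs_natAbs_eq_min, ← ZMod.val_sub h]
  exact min_le_left _ _

theorem ZMod.natAbs_valMinAbs_sub_mul_lt {N b : ℕ} [NeZero N] {x y : ZMod N}
    (h : x.val * b / N = y.val * b / N) : (x - y).valMinAbs.natAbs * b < N := by
  wlog hyx : y.val ≤ x.val generalizing x y
  · rw [← natAbs_valMinAbs_neg, neg_sub]
    exact this h.symm (by omega)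
  calc (x - y).valMinAbs.natAbs * b ≤ (x.val - y.val) * b :=
        Nat.mul_le_mul_right b (natAbs_valMinAbs_le_val_sub hyx)
    _ = x.val * b - y.val * b := Nat.sub_mul ..
    _ < N := Nat.sub_lt_of_div_eq_div h (NeZero.pos N)

theorem ZMod.val_mem_Icc_of_between {N : ℕ} [NeZero N] {x c : ZMod N} {v : ℕ}
    (h : x.val ≤ v ∧ v ≤ (x + c).val ∨ (x + c).val ≤ v ∧ v ≤ x.val) :
    x.val ∈ Icc (v - c.val) v ∨ x.val ∈ Icc (N - c.val) N := by
  have := x.val_lt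
  simp only [mem_Icc]
  rcases lt_or_ge (x.val + c.val) N with hlt | hge
  · rw [ZMod.val_add, Nat.mod_eq_of_lt hlt] at h
    omega
  · omega

theorem MonoidHom.card_filter_apply_eq_le {G M : Type*} [Group G] [Fintype G] [Monoid M]
    [DecidableEq M] (f : G →* M) (y : M) : #{a | f a = y} ≤ Nat.card f.ker := by
  rcases (filter (fun a => f a = y) univ).eq_empty_or_nonempty with h | ⟨a₀, ha₀⟩
  · simp [h]
  obtain rfl := (mem_filter.mp ha₀).2
  rw [card_fiber_eq_of_mem_range f ⟨a₀, rfl⟩ ⟨1, map_one f⟩]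
  simp [Nat.card_eq_fintype_card, Fintype.card_subtype, MonoidHom.mem_ker]

instance ZMod.hasEnoughRootsOfUnity_multiplicative (N : ℕ) [NeZero N] :
    HasEnoughRootsOfUnity (Multiplicative (ZMod N)) N where
  prim := ⟨.ofAdd 1, by
    rw [IsPrimitiveRoot.iff_orderOf, orderOf_ofAdd_eq_addOrderOf, ZMod.addOrderOf_one]⟩
  cyc := by
    have : IsCyclic (Multiplicative (ZMod N))ˣ := isCyclic_of_surjective _ toUnits.surjective
    infer_instance

theorem card_monoidHom_multiplicative_zmod (A : Type*) [CommGroup A] [Finite A] {N : ℕ}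
    [NeZero N] (hN : Monoid.exponent A ∣ N) :
    Nat.card (A →* Multiplicative (ZMod N)) = Nat.card A := by
  have := HasEnoughRootsOfUnity.of_dvd (Multiplicative (ZMod N)) hN
  rw [Nat.card_congr (MulEquiv.monoidHomCongrRightEquiv toUnits),
    CommGroup.card_monoidHom_of_hasEnoughRootsOfUnity]

theorem exists_monoidHom_ne_one_forall_natAbs_valMinAbs_mul_lt {A : Type*} [CommGroup A]
    [Finite A] (S : Finset A) {N b : ℕ} [NeZero N] (hN : Monoid.exponent A ∣ N) (hb : 0 < b)
    (hbS : b ^ #S < Nat.card A) :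
    ∃ χ : A →* Multiplicative (ZMod N), χ ≠ 1 ∧
      ∀ s ∈ S, (χ s).toAdd.valMinAbs.natAbs * b < N := by
  classical
  have hcard := card_monoidHom_multiplicative_zmod A hN
  have : Finite (A →* Multiplicative (ZMod N)) :=
    Nat.finite_of_card_ne_zero (by rw [hcard]; exact Nat.card_pos.ne')
  have := Fintype.ofFinite (A →* Multiplicative (ZMod N))
  let box (χ : A →* Multiplicative (ZMod N)) (s : S) : Fin b :=
    ⟨(χ s).toAdd.val * b / N,
      Nat.div_lt_of_lt_mul (Nat.mul_lt_mul_of_pos_right (ZMod.val_lt _) hb)⟩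
  obtain ⟨χ₁, χ₂, hne, heq⟩ := Fintype.exists_ne_map_eq_of_card_lt box <| by
    rwa [Fintype.card_fun, Fintype.card_fin, Fintype.card_coe, ← Nat.card_eq_fintype_card, hcard]
  refine ⟨χ₁ / χ₂, div_ne_one.mpr hne, fun s hs => ?_⟩
  simpa using ZMod.natAbs_valMinAbs_sub_mul_lt (N := N) (congrArg Fin.val (congrFun heq ⟨s, hs⟩))

theorem MonoidHom.card_ker_dvd_val_toAdd {A : Type*} [CommGroup A] [Finite A] {N : ℕ}
    [NeZero N] (χ : A →* Multiplicative (ZMod N)) (hN : Nat.card A ∣ N) (a : A) :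
    Nat.card χ.ker ∣ (χ a).toAdd.val := by
  set k := Nat.card χ.range
  have hk : 0 < k := Nat.card_pos
  have hpow : k • (χ a).toAdd = 0 := by
    rw [← toAdd_pow, ← Subgroup.coe_pow χ.range ⟨χ a, a, rfl⟩ k, pow_card_eq_one']
    rfl
  have hdvd : N ∣ k * (χ a).toAdd.val := by
    rw [← ZMod.natCast_eq_zero_iff, Nat.cast_mul, ZMod.natCast_zmod_val, ← nsmul_eq_mul, hpow]
  refine Nat.dvd_of_mul_dvd_mul_left hk (dvd_trans ?_ hdvd)
  rw [show k = χ.ker.index from (Subgroup.index_ker χ).symm, mul_comm, Subgroup.card_mul_index]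
  exact hN

theorem MonoidHom.card_ker_le_natAbs_valMinAbs {A : Type*} [CommGroup A] [Finite A] {N : ℕ}
    [NeZero N] (χ : A →* Multiplicative (ZMod N)) (hN : Nat.card A ∣ N) {a : A}
    (ha : χ a ≠ 1) :
    Nat.card χ.ker ≤ (χ a).toAdd.valMinAbs.natAbs := by
  have hdvd := χ.card_ker_dvd_val_toAdd hN a
  have hval : (χ a).toAdd.val ≠ 0 := by rwa [ZMod.val_ne_zero, Ne, toAdd_eq_zero]
  have hlt := (χ a).toAdd.val_lt
  have hgN : Nat.card χ.ker ∣ N := (Subgroup.card_subgroup_dvd_card _).trans hN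
  rw [ZMod.valMinAbs_natAbs_eq_min]
  exact le_min (Nat.le_of_dvd (by omega) hdvd) (Nat.le_of_dvd (by omega) (Nat.dvd_sub hgN hdvd))

theorem MonoidHom.card_filter_val_toAdd_mem_Icc_le {A : Type*} [CommGroup A] [Fintype A]
    {N : ℕ} [NeZero N] (χ : A →* Multiplicative (ZMod N)) (hN : Nat.card A ∣ N) (lo hi : ℕ) :
    #{a | (χ a).toAdd.val ∈ Icc lo hi} ≤ hi + Nat.card χ.ker - lo := by
  classical
  have hg : 0 < Nat.card χ.ker := Nat.card_pos
  refine (card_le_mul_card_image_of_maps_to (f := fun a => (χ a).toAdd.val)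
    (t := {x ∈ Icc lo hi | Nat.card χ.ker ∣ x}) (fun a ha => ?_) _ fun x _ => ?_).trans
      (Nat.mul_card_filter_dvd_Icc_le hg lo hi)
  · exact mem_filter.mpr ⟨(mem_filter.mp ha).2, χ.card_ker_dvd_val_toAdd hN a⟩
  · refine (card_le_card fun a ha => ?_).trans (χ.card_filter_apply_eq_le (.ofAdd (x : ZMod N)))
    rw [mem_filter] at ha ⊢
    rw [← ha.2, ZMod.natCast_zmod_val]
    exact ⟨mem_univ a, rfl⟩

section Crossing

variable {A : Type*} [CommGroup A] [Fintype A] {N : ℕ} [NeZero N]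
  (χ : A →* Multiplicative (ZMod N)) (hN : Nat.card A ∣ N) {D : Set A} {v : ℕ}
  (hD : ∀ a ∈ D, (χ a).toAdd.val ≤ v) (hDc : ∀ a ∉ D, v ≤ (χ a).toAdd.val)
include hN hD hDc

open scoped Classical in
theorem MonoidHom.card_xor_mem_mul_le_val (s : A) :
    #{a | Xor (a ∈ D) (a * s ∈ D)} ≤ 2 * (χ s).toAdd.val + 2 * Nat.card χ.ker := by
  set c := (χ s).toAdd
  calc #{a | Xor (a ∈ D) (a * s ∈ D)}
      ≤ #(({a | (χ a).toAdd.val ∈ Icc (v - c.val) v} : Finset A) ∪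
          ({a | (χ a).toAdd.val ∈ Icc (N - c.val) N} : Finset A)) := by
        refine card_le_card fun a ha => ?_
        rw [mem_union, mem_filter, mem_filter]
        refine (ZMod.val_mem_Icc_of_between (c := c) ?_).imp
          (⟨mem_univ a, ·⟩) (⟨mem_univ a, ·⟩)
        have hmul : (χ (a * s)).toAdd = (χ a).toAdd + c := by rw [map_mul, toAdd_mul]
        rw [← hmul]
        rcases (mem_filter.mp ha).2 with ⟨ha, has⟩ | ⟨has, ha⟩
        · exact .inl ⟨hD a ha, hDc _ has⟩
        · exact .inr ⟨hD _ has, hDc a ha⟩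
    _ ≤ (v + Nat.card χ.ker - (v - c.val)) + (N + Nat.card χ.ker - (N - c.val)) :=
        (card_union_le _ _).trans (add_le_add (χ.card_filter_val_toAdd_mem_Icc_le hN _ _)
          (χ.card_filter_val_toAdd_mem_Icc_le hN _ _))
    _ ≤ 2 * c.val + 2 * Nat.card χ.ker := by omega

open scoped Classical in
theorem MonoidHom.card_xor_mem_mul_le (s : A) :
    #{a | Xor (a ∈ D) (a * s ∈ D)} ≤
      2 * (χ s).toAdd.valMinAbs.natAbs + 2 * Nat.card χ.ker := by
  have hinv : #{a | Xor (a ∈ D) (a * s ∈ D)} = #{a | Xor (a ∈ D) (a * s⁻¹ ∈ D)} :=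
    card_equiv (Equiv.mulRight s) fun a => by simp [xor_comm]
  have h₁ := χ.card_xor_mem_mul_le_val hN hD hDc s
  have h₂ := hinv ▸ χ.card_xor_mem_mul_le_val hN hD hDc s⁻¹
  have hneg : (-(χ s).toAdd).val ≤ N - (χ s).toAdd.val := by
    rw [ZMod.neg_val']; exact Nat.mod_le _ _
  rw [map_inv, toAdd_inv] at h₂
  rw [ZMod.valMinAbs_natAbs_eq_min]
  omega

end Crossing

open scoped Classical in
theorem cayleyGraph_bdry_eq_sum {A : Type*} [Group A] [Fintype A] (Sg : Finset A)
    (D : Set A) :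
    (cayleyGraph A Sg).bdry D = ∑ s ∈ Sg, #{a | Xor (a ∈ D) (a * s ∈ D)} := by
  change Nat.card {p : A × Sg // Xor (p.1 ∈ D) (p.1 * p.2 ∈ D)} = _
  rw [Nat.card_eq_fintype_card, Fintype.card_subtype, card_filter,
    Fintype.sum_prod_type_right, ← sum_coe_sort Sg]
  simp only [card_filter]

theorem width_cayleyGraph_le_sum {A : Type*} [CommGroup A] [Fintype A] (Sg : Finset A) {N : ℕ}
    [NeZero N] (χ : A →* Multiplicative (ZMod N)) (hN : Nat.card A ∣ N) :
    (cayleyGraph A Sg).width ≤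
      ∑ s ∈ Sg, (2 * (χ s).toAdd.valMinAbs.natAbs + 2 * Nat.card χ.ker) := by
  obtain ⟨e, he⟩ := Fintype.exists_equiv_fin_image_lt_sublevel fun a => (χ a).toAdd.val
  refine Nat.sInf_le ⟨e, fun n => ?_⟩
  obtain ⟨v, hD, hDc⟩ := he n
  exact (cayleyGraph_bdry_eq_sum Sg _).trans_le
    (sum_le_sum fun s _ => χ.card_xor_mem_mul_le hN hD hDc s)

theorem width_cayleyGraph_mul_le {A : Type*} [CommGroup A] [Fintype A] {Sg : Finset A}
    (hSg : Subgroup.closure (Sg : Set A) = ⊤) {b : ℕ} (hb : 0 < b)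
    (hbS : b ^ #Sg < Nat.card A) :
    (cayleyGraph A Sg).width * b ≤ 4 * #Sg * Nat.card A := by
  have : NeZero (Nat.card A) := ⟨Nat.card_pos.ne'⟩
  obtain ⟨χ, hχ, hχS⟩ := exists_monoidHom_ne_one_forall_natAbs_valMinAbs_mul_lt Sg
    (Monoid.exponent_dvd_of_forall_pow_eq_one fun a => pow_card_eq_one') hb hbS
  obtain ⟨s₀, hs₀, hχs₀⟩ : ∃ s ∈ Sg, χ s ≠ 1 := by
    by_contra! h
    exact hχ (MonoidHom.eq_of_eqOn_dense hSg fun s hs => by simpa using h s hs)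
  have hker : Nat.card χ.ker * b < Nat.card A :=
    (Nat.mul_le_mul_right b (χ.card_ker_le_natAbs_valMinAbs dvd_rfl hχs₀)).trans_lt
      (hχS s₀ hs₀)
  calc (cayleyGraph A Sg).width * b
      ≤ ∑ s ∈ Sg, (2 * (χ s).toAdd.valMinAbs.natAbs + 2 * Nat.card χ.ker) * b := by
        rw [← sum_mul]
        exact Nat.mul_le_mul_right b (width_cayleyGraph_le_sum Sg χ dvd_rfl)
    _ ≤ ∑ s ∈ Sg, 4 * Nat.card A := sum_le_sum fun s hs => by nlinarith [hχS s hs]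
    _ = 4 * #Sg * Nat.card A := by rw [sum_const, smul_eq_mul]; ring

/-- **Lemma 3.4.** Let `A` be a finite abelian group with finite generating set `Σ`.
Then `w(X(A; Σ)) ≤ 6|Σ||A| / ⌊(|A| - 1)^{1/|Σ|}⌋`, provided the floor is at least 1. -/
theorem stmt8 (A : Type*) [CommGroup A] [Finite A]
    (Sg : Finset A) (hSg : Subgroup.closure (Sg : Set A) = ⊤)
    (hfl : 1 ≤ ⌊((Nat.card A : ℝ) - 1) ^ ((1 : ℝ) / (Sg.card : ℝ))⌋₊) :
    ((cayleyGraph A Sg).width : ℝ) ≤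
      6 * (Sg.card : ℝ) * (Nat.card A : ℝ) /
        (⌊((Nat.card A : ℝ) - 1) ^ ((1 : ℝ) / (Sg.card : ℝ))⌋₊ : ℝ) := by
  have := Fintype.ofFinite A
  set b := ⌊((Nat.card A : ℝ) - 1) ^ ((1 : ℝ) / (Sg.card : ℝ))⌋₊
  rw [le_div_iff₀ (by exact_mod_cast hfl)]
  rcases Sg.eq_empty_or_nonempty with rfl | hSne
  · have : NeZero (Nat.card A) := ⟨Nat.card_pos.ne'⟩
    have hW := width_cayleyGraph_le_sum ∅ (1 : A →* Multiplicative (ZMod (Nat.card A))) dvd_rfl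
    simp_all
  have hbS : b ^ #Sg < Nat.card A := by
    have hA : (1 : ℝ) ≤ Nat.card A := by exact_mod_cast Nat.card_pos
    have hpow := Nat.floor_rpow_one_div_pow_le (sub_nonneg.mpr hA) (card_ne_zero.mpr hSne)
    exact_mod_cast (by linarith : (b : ℝ) ^ #Sg < Nat.card A)
  have hW : ((cayleyGraph A Sg).width : ℝ) * b ≤ 4 * #Sg * Nat.card A := by
    exact_mod_cast width_cayleyGraph_mul_le hSg hfl hbS
  nlinarith [(by positivity : (0 : ℝ) ≤ #Sg * Nat.card A)]
end
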